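/- If ⟨h,s⟩ ⊨_R {φ; (x+ι ↦_mut e') ∗ P'} where e' is an expression mentioning only stack variables, then ⟨h[(⟦x⟧ₛ+ι) ↦ ⟦e⟧ₛ], s⟩ ⊨_R {φ; (x+ι ↦_mut e) ∗ P'} (soundness of the Write rule's heap transformation). -/

import Mathlib

/-- Locations and values are natural numbers. -/
abbrev Loc := ℕ
abbrev Val := ℕ
/-- Heaps: partial maps from locations to values. -/
abbrev Heap := Loc → Option Val
/-- Stacks: maps from variables to values. -/
abbrev Stack := String → Val

/-- Domain of a heap. -/
def Heap.dom (h : Heap) : Set Loc := {l | h l ≠ none}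

/-- Disjointness of heaps. -/
def Heap.Disj (h₁ h₂ : Heap) : Prop := ∀ l, h₁ l = none ∨ h₂ l = none

/-- Disjoint union of heaps. -/
def Heap.union (h₁ h₂ : Heap) : Heap :=
  fun l => match h₁ l with
    | some v => some v
    | none => h₂ l

/-- Pointwise heap update. -/
def Heap.update (h : Heap) (l : Loc) (v : Val) : Heap :=
  fun l' => if l' = l then some v else h l'

/-- Permission annotations. -/
inductive Perm where
  | mut : Perm
  | imm : Perm
deriving DecidableEq

/-- Expressions. -/
inductive Expr where
  | lit : ℕ → Expr
  | var : String → Expr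
  | eq  : Expr → Expr → Expr
  | and : Expr → Expr → Expr
  | not : Expr → Expr

/-- Expression evaluation (booleans coded as 1/0). -/
def Expr.eval (s : Stack) : Expr → ℕ
  | .lit n => n
  | .var x => s x
  | .eq e₁ e₂ => if e₁.eval s = e₂.eval s then 1 else 0
  | .and e₁ e₂ => if e₁.eval s = 1 then (if e₂.eval s = 1 then 1 else 0) else 0
  | .not e => if e.eval s = 1 then 0 else 1

/-- Variables occurring in an expression. -/
def Expr.vars : Expr → Set String
  | .lit _ => ∅
  | .var x => {x}
  | .eq e₁ e₂ => e₁.vars ∪ e₂.vars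
  | .and e₁ e₂ => e₁.vars ∪ e₂.vars
  | .not e => e.vars

/-- Symbolic heaps. -/
inductive SymHeap where
  | emp : SymHeap
  | pts : Expr → ℕ → Perm → Expr → SymHeap   -- e₁ + ι ↦ₐ e₂
  | blk : Expr → ℕ → Perm → SymHeap          -- [e]ₙ with permission a
  | star : SymHeap → SymHeap → SymHeap

/-- Variables occurring in a symbolic heap. -/
def SymHeap.vars : SymHeap → Set String
  | .emp => ∅
  | .pts e₁ _ _ e₂ => e₁.vars ∪ e₂.vars
  | .blk e _ _ => e.vars
  | .star P Q => P.vars ∪ Q.vars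

/-- Satisfaction ⟨h,s⟩ ⊨_R {φ; P}, parameterized by the block-metadata map `bl`
and the fixed set `R` of read-only locations. -/
def Sat (bl : Loc → Loc) (R : Set Loc) (h : Heap) (s : Stack) (φ : Expr) :
    SymHeap → Prop
  | .emp => φ.eval s = 1 ∧ ∀ l, h l = none
  | .pts e₁ ι a e₂ =>
      φ.eval s = 1 ∧
      h.dom = {e₁.eval s + ι} ∧
      h (e₁.eval s + ι) = some (e₂.eval s) ∧
      (e₁.eval s + ι ∈ R ↔ a = .imm)
  | .blk e n a =>
      φ.eval s = 1 ∧
      h.dom = {bl (e.eval s)} ∧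
      h (bl (e.eval s)) = some n ∧
      (bl (e.eval s) ∈ R ↔ a = .imm)
  | .star P Q =>
      ∃ h₁ h₂, h₁.Disj h₂ ∧ h = h₁.union h₂ ∧
        Sat bl R h₁ s φ P ∧ Sat bl R h₂ s φ Q

/-- Iterated separating conjunction of a list of symbolic heaps. -/
def iterStar (Ps : List SymHeap) : SymHeap := Ps.foldr SymHeap.star SymHeap.emp

/-!
The written location `⟦x⟧ₛ + ι` is the whole domain of the points-to sub-heap, so the write
only changes that sub-heap's content; it stays disjoint from the sub-heap satisfying `P'`,
which is left untouched.
-/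

namespace Heap

theorem dom_update (h : Heap) (l : Loc) (v : Val) : (h.update l v).dom = insert l h.dom := by
  ext l'
  by_cases hl : l' = l <;> simp [dom, update, hl]

theorem Disj.eq_none_of_mem_dom_left {h₁ h₂ : Heap} (hd : h₁.Disj h₂) {l : Loc}
    (hl : l ∈ h₁.dom) : h₂ l = none :=
  (hd l).resolve_left hl

theorem Disj.update_left {h₁ h₂ : Heap} (hd : h₁.Disj h₂) {l : Loc} (hl : h₂ l = none)
    (v : Val) : (h₁.update l v).Disj h₂ := by
  intro l'
  by_cases hl' : l' = l
  · exact .inr (hl' ▸ hl)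
  · simpa [update, hl'] using hd l'

theorem union_update_left (h₁ h₂ : Heap) (l : Loc) (v : Val) :
    (h₁.union h₂).update l v = (h₁.update l v).union h₂ := by
  funext l'
  by_cases hl' : l' = l <;> simp [update, union, hl']

end Heap

theorem Sat.pts_update {bl : Loc → Loc} {R : Set Loc} {h : Heap} {s : Stack} {φ x e e' : Expr}
    {ι : ℕ} {a : Perm} (hsat : Sat bl R h s φ (.pts x ι a e')) :
    Sat bl R (h.update (x.eval s + ι) (e.eval s)) s φ (.pts x ι a e) := by
  obtain ⟨hφ, hdom, -, hR⟩ := hsat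
  refine ⟨hφ, ?_, by simp [Heap.update], hR⟩
  rw [Heap.dom_update, hdom, Set.insert_eq_of_mem (Set.mem_singleton _)]

theorem write_rule_sound (bl : Loc → Loc) (R : Set Loc) (h : Heap)
    (s : Stack) (φ x e e' : Expr) (ι : ℕ) (P' : SymHeap)
    (hsat : Sat bl R h s φ (.star (.pts x ι .mut e') P')) :
    Sat bl R (h.update (x.eval s + ι) (e.eval s)) s φ
      (.star (.pts x ι .mut e) P') := by
  obtain ⟨h₁, h₂, hdisj, rfl, hpts, hP'⟩ := hsat
  have hfree : h₂ (x.eval s + ι) = none :=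
    hdisj.eq_none_of_mem_dom_left (by rw [hpts.2.1]; rfl)
  exact ⟨_, h₂, hdisj.update_left hfree _, Heap.union_update_left h₁ h₂ _ _,
    hpts.pts_update, hP'⟩
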